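/- Let X and Y be compact metric spaces, ν a finite Borel measure on X, f : X → Y a Borel measurable function, μ̂ = f∗ν the pushforward of ν to Y, and μ = (Id, f)∗ν the pushforward of ν onto the graph of f in X × Y. Let (μ_y)_{y∈Y} be a disintegration of μ over the fibers X × {y} with respect to μ̂. Then for μ̂-almost every y ∈ Y: y is not an atom of μ̂ if and only if μ_y and ν are mutually singular (as measures on X, identifying X × {y} with X). -/

import Mathlib

open MeasureTheory

/-!
Since the disintegrated measure lives on the graph of `f`, almost every `μ_y` is carried by the
fibre `f⁻¹{y}`. If `y` is not an atom, this fibre is `ν`-null, so `μ_y ⟂ ν`. If `y` is an atom,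
testing the disintegration on `s ×ˢ {y}` gives `μ_y s * μ̂ {y} = ν (s ∩ f⁻¹{y}) ≤ ν s`, so
`μ_y ≪ ν`, which is incompatible with `μ_y ⟂ ν` for a probability measure `μ_y`.
-/

section GraphDisintegration

variable {X Y : Type*} [MeasurableSpace X] [MeasurableSpace Y]
  {ν : Measure X} {f : X → Y} {μy : Y → Measure X}

lemma map_graph_apply_prod (hf : Measurable f) {s : Set X} (hs : MeasurableSet s)
    {t : Set Y} (ht : MeasurableSet t) :
    ν.map (fun x => (x, f x)) (s ×ˢ t) = ν (s ∩ f ⁻¹' t) := by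
  rw [Measure.map_apply (by fun_prop : Measurable fun x => (x, f x)) (hs.prod ht)]
  rfl

lemma lintegral_measure_slice_prod_singleton [MeasurableSingletonClass Y] (μhat : Measure Y)
    (s : Set X) (y : Y) :
    ∫⁻ y', μy y' {x | (x, y') ∈ s ×ˢ {y}} ∂μhat = μy y s * μhat {y} := by
  have hslice : (fun y' => μy y' {x | (x, y') ∈ s ×ˢ {y}})
      = Set.indicator {y} (fun _ => μy y s) := by
    funext y'
    by_cases hy' : y' = y
    · subst hy'
      simp [Set.mem_prod]
    · simp [Set.mem_prod, hy']
  rw [hslice, lintegral_indicator_const (measurableSet_singleton y)]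

lemma ae_measure_compl_preimage_singleton_eq_zero [IsFiniteMeasure ν] [MeasurableEq Y]
    (hf : Measurable f) (hprob : ∀ᵐ y ∂ν.map f, IsProbabilityMeasure (μy y))
    (hdis : ∀ s : Set (X × Y), MeasurableSet s →
      ν.map (fun x => (x, f x)) s = ∫⁻ y, μy y {x | (x, y) ∈ s} ∂ν.map f) :
    ∀ᵐ y ∂ν.map f, μy y (f ⁻¹' {y})ᶜ = 0 := by
  have hgraph : MeasurableSet {p : X × Y | f p.1 = p.2} :=
    measurableSet_eq_fun (hf.comp measurable_fst) measurable_snd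
  have hfibre_le : ∀ᵐ y ∂ν.map f, μy y (f ⁻¹' {y}) ≤ 1 :=
    hprob.mono fun y hy => prob_le_one
  have hmass : ∫⁻ y, μy y (f ⁻¹' {y}) ∂ν.map f = ∫⁻ _, 1 ∂ν.map f :=
    calc ∫⁻ y, μy y (f ⁻¹' {y}) ∂ν.map f = ν.map (fun x => (x, f x)) {p | f p.1 = p.2} :=
          (hdis _ hgraph).symm
      _ = ν Set.univ := by
          rw [Measure.map_apply (by fun_prop : Measurable fun x => (x, f x)) hgraph]
          congr 1
          ext x
          simp
      _ = ∫⁻ _, 1 ∂ν.map f := by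
          rw [lintegral_const, one_mul, Measure.map_apply hf MeasurableSet.univ]
          rfl
  have hfibre : ∀ᵐ y ∂ν.map f, μy y (f ⁻¹' {y}) = 1 :=
    ae_eq_of_ae_le_of_lintegral_le hfibre_le (by simp [hmass, measure_ne_top])
      aemeasurable_const hmass.ge
  filter_upwards [hprob, hfibre] with y hy hy1
  exact (prob_compl_eq_zero_iff (hf (measurableSet_singleton y))).2 hy1

lemma absolutelyContinuous_of_measure_singleton_ne_zero [MeasurableSingletonClass Y]
    (hf : Measurable f)
    (hdis : ∀ s : Set (X × Y), MeasurableSet s →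
      ν.map (fun x => (x, f x)) s = ∫⁻ y, μy y {x | (x, y) ∈ s} ∂ν.map f)
    {y : Y} (hy : ν.map f {y} ≠ 0) : μy y ≪ ν := by
  refine Measure.AbsolutelyContinuous.mk fun s hs hνs => ?_
  have hslice : μy y s * ν.map f {y} = ν (s ∩ f ⁻¹' {y}) := by
    rw [← lintegral_measure_slice_prod_singleton,
      ← hdis _ (hs.prod (measurableSet_singleton y)),
      map_graph_apply_prod hf hs (measurableSet_singleton y)]
  have hzero : μy y s * ν.map f {y} = 0 :=
    hslice.trans (measure_mono_null Set.inter_subset_left hνs)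
  exact (mul_eq_zero.1 hzero).resolve_right hy

end GraphDisintegration

theorem stmt0_general
    {X Y : Type*} [MeasurableSpace X]
    [MetricSpace Y] [CompactSpace Y] [MeasurableSpace Y] [BorelSpace Y]
    (ν : Measure X) [IsFiniteMeasure ν]
    (f : X → Y) (hf : Measurable f)
    (μhat : Measure Y) (hμhat : μhat = ν.map f)
    (μ : Measure (X × Y)) (hμ : μ = ν.map (fun x => (x, f x)))
    (μy : Y → Measure X)
    (hprob : ∀ᵐ y ∂μhat, IsProbabilityMeasure (μy y))
    (hdis : ∀ s : Set (X × Y), MeasurableSet s →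
      μ s = ∫⁻ y, μy y {x | (x, y) ∈ s} ∂μhat) :
    ∀ᵐ y ∂μhat, (μhat {y} = 0 ↔ μy y ⟂ₘ ν) := by
  subst hμhat hμ
  filter_upwards [hprob, ae_measure_compl_preimage_singleton_eq_zero hf hprob hdis]
    with y hy hfibre
  have hfibre_meas : MeasurableSet (f ⁻¹' {y}) := hf (measurableSet_singleton y)
  constructor
  · intro hatom
    refine ⟨(f ⁻¹' {y})ᶜ, hfibre_meas.compl, hfibre, ?_⟩
    rwa [compl_compl, ← Measure.map_apply hf (measurableSet_singleton y)]
  · intro hsing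
    by_contra hatom
    have hac := absolutelyContinuous_of_measure_singleton_ne_zero hf hdis hatom
    exact IsProbabilityMeasure.ne_zero (μy y)
      (Measure.eq_zero_of_absolutelyContinuous_of_mutuallySingular hac hsing)

/-- Disintegration of the graph measure: for a.e. `y`, `y` is not an atom of the
pushforward `μ̂ = f∗ν` iff the conditional measure `μ_y` is mutually singular with `ν`. -/
theorem stmt0
    {X Y : Type*} [MetricSpace X] [CompactSpace X] [MeasurableSpace X] [BorelSpace X]
    [MetricSpace Y] [CompactSpace Y] [MeasurableSpace Y] [BorelSpace Y]
    (ν : Measure X) [IsFiniteMeasure ν]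
    (f : X → Y) (hf : Measurable f)
    (μhat : Measure Y) (hμhat : μhat = ν.map f)
    (μ : Measure (X × Y)) (hμ : μ = ν.map (fun x => (x, f x)))
    (μy : Y → Measure X)
    (hprob : ∀ᵐ y ∂μhat, IsProbabilityMeasure (μy y))
    (hdis : ∀ s : Set (X × Y), MeasurableSet s →
      μ s = ∫⁻ y, μy y {x | (x, y) ∈ s} ∂μhat) :
    ∀ᵐ y ∂μhat, (μhat {y} = 0 ↔ μy y ⟂ₘ ν) :=
  stmt0_general ν f hf μhat hμhat μ hμ μy hprob hdis
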